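/- For all integers n ≥ 2, the function Ǧ satisfies the recursion of Ĝ; that is, Ǧ_n(w,x,z) = ∑_{k=1}^{n-1} Ǧ_k(w,x,z) · Ǧ_{n-k}(w+kz,x,z) / (1-w-(n-1)x). -/

import Mathlib

/-!
Write `D_k(w) = Ǧ_k(w + x) - Ǧ_k(w)`. Comparing the two recursions, the claim amounts to
`∑_k D_k(w) Ǧ_{n-k}(w + kz) = (n - 1) x Ǧ_n(w)`, which is proved by strong induction on `n`
simultaneously for all admissible `w`. The recursion of `Ǧ` at `w` and, inductively, that of `Ĝ`
at `w + x` give `(1 - w) D_k(w) = k x Ǧ_k(w + x) + ∑_i Ǧ_i(w + x) D_{k-i}(w + iz)`. Substituting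
this and exchanging the resulting double sum, the induction hypothesis at `w + iz` turns the inner
sums into `(n - i - 1) x Ǧ_i(w + x) Ǧ_{n-i}(w + iz)`; the coefficients `k` and `n - 1 - k` add up
to `n - 1`, leaving `(n - 1) x` times the sum that defines `(1 - w) Ǧ_n(w)`.
-/

open Finset MvPolynomial

noncomputable section

/-- The field of rational functions in three variables `w, x, z` over `ℚ`. -/
abbrev F3 : Type := FractionRing (MvPolynomial (Fin 3) ℚ)

/-- the variable `w` -/
def W : F3 := algebraMap (MvPolynomial (Fin 3) ℚ) F3 (X 0)
/-- the variable `x` -/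
def Xv : F3 := algebraMap (MvPolynomial (Fin 3) ℚ) F3 (X 1)
/-- the variable `z` -/
def Zv : F3 := algebraMap (MvPolynomial (Fin 3) ℚ) F3 (X 2)

/-- `Ǧ_n(w, x, z)`, defined by `Ǧ_1(w,x,z) = 1/(1-w)` and, for `n ≥ 2`,
`Ǧ_n(w,x,z) = ∑_{k=1}^{n-1} Ǧ_k(w+x,x,z) Ǧ_{n-k}(w+kz,x,z) / (1-w)`. -/
def Gcheck (x z : F3) : ℕ → F3 → F3
  | 0, _ => 0
  | 1, w => 1 / (1 - w)
  | (n + 2), w =>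
      ∑ k ∈ (Finset.Icc 1 (n + 1)).attach,
        Gcheck x z k.1 (w + x) * Gcheck x z (n + 2 - k.1) (w + (k.1 : F3) * z) /
          (1 - w)
  termination_by n _ => n
  decreasing_by
  · have := Finset.mem_Icc.mp k.2; omega
  · have := Finset.mem_Icc.mp k.2; omega

open scoped fwdDiff

theorem sum_Icc_sum_Icc_eq_sum_Icc_sum_Icc_add {M : Type*} [AddCommMonoid M] (m : ℕ)
    (f : ℕ → ℕ → M) :
    ∑ k ∈ Icc 1 m, ∑ i ∈ Icc 1 (k - 1), f i k =
      ∑ i ∈ Icc 1 m, ∑ j ∈ Icc 1 (m - i), f i (i + j) := by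
  rw [sum_comm' (t' := Icc 1 m) (s' := fun i => Icc (i + 1) m)
    (by intro k i; simp only [mem_Icc]; omega)]
  refine sum_congr rfl fun i hi => ?_
  have hm : m = i + (m - i) := by have := (mem_Icc.mp hi).2; omega
  conv_lhs => rw [hm, ← map_add_left_Icc, sum_map]
  rfl

/-- The recursions started at `w` only evaluate denominators `1 - w'` at points
`w' = w + a x + b z` with `a, b ∈ ℕ`; none of these may equal `1`. -/
def Admissible (x z w : F3) : Prop := ∀ a b : ℕ, w + a * x + b * z ≠ 1

namespace Admissible

variable {x z w : F3}

theorem add_x (hw : Admissible x z w) : Admissible x z (w + x) := fun a b => by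
  simpa [add_mul, add_assoc, add_left_comm _ x] using hw (a + 1) b

theorem add_natCast_mul_z (hw : Admissible x z w) (k : ℕ) : Admissible x z (w + k * z) :=
  fun a b => by
  simpa [add_mul, add_assoc, add_left_comm _ ((k : F3) * z), add_comm _ ((k : F3) * z)]
    using hw a (b + k)

theorem one_sub_sub_natCast_mul_ne_zero (hw : Admissible x z w) (m : ℕ) :
    1 - w - m * x ≠ 0 := by
  intro h
  exact hw m 0 (by linear_combination -h)

theorem one_sub_ne_zero (hw : Admissible x z w) : 1 - w ≠ 0 := by
  simpa using hw.one_sub_sub_natCast_mul_ne_zero 0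

end Admissible

theorem admissible_W : Admissible Xv Zv W := by
  intro a b h
  have hpoly : (X 0 + C (a : ℚ) * X 1 + C (b : ℚ) * X 2 : MvPolynomial (Fin 3) ℚ) = 1 := by
    apply IsFractionRing.injective (MvPolynomial (Fin 3) ℚ) F3
    simpa [W, Xv, Zv] using h
  simpa using congrArg (eval 0) hpoly

section Recursions

variable {x z : F3}

theorem Gcheck_one (w : F3) : Gcheck x z 1 w = 1 / (1 - w) := by
  simp [Gcheck]

theorem one_sub_mul_Gcheck {n : ℕ} (hn : 2 ≤ n) {w : F3} (hw : 1 - w ≠ 0) :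
    (1 - w) * Gcheck x z n w =
      ∑ k ∈ Icc 1 (n - 1), Gcheck x z k (w + x) * Gcheck x z (n - k) (w + k * z) := by
  obtain ⟨m, rfl⟩ : ∃ m, n = m + 2 := ⟨n - 2, by omega⟩
  rw [Gcheck, sum_attach (Icc 1 (m + 1))
    (fun k => Gcheck x z k (w + x) * Gcheck x z (m + 2 - k) (w + k * z) / (1 - w)),
    ← sum_div, mul_div_cancel₀ _ hw]
  rfl

theorem one_sub_sub_mul_Gcheck_of_sum_fwdDiff {n : ℕ} (hn : 2 ≤ n) {w : F3} (hw : 1 - w ≠ 0)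
    (hT : ∑ k ∈ Icc 1 (n - 1), Δ_[x] (Gcheck x z k) w * Gcheck x z (n - k) (w + k * z) =
      (n - 1 : ℕ) * x * Gcheck x z n w) :
    (1 - w - (n - 1 : ℕ) * x) * Gcheck x z n w =
      ∑ k ∈ Icc 1 (n - 1), Gcheck x z k w * Gcheck x z (n - k) (w + k * z) := by
  simp only [fwdDiff, sub_mul, sum_sub_distrib, ← one_sub_mul_Gcheck hn hw] at hT
  linear_combination hT

theorem one_sub_mul_fwdDiff_Gcheck_one {w : F3} (hw : 1 - w ≠ 0) (hwx : 1 - (w + x) ≠ 0) :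
    (1 - w) * Δ_[x] (Gcheck x z 1) w = x * Gcheck x z 1 (w + x) := by
  simp only [fwdDiff, Gcheck_one]
  field_simp
  ring

theorem one_sub_mul_fwdDiff_Gcheck {m : ℕ} (hm : 2 ≤ m) {w : F3} (hw : 1 - w ≠ 0)
    (hR : (1 - (w + x) - (m - 1 : ℕ) * x) * Gcheck x z m (w + x) =
      ∑ i ∈ Icc 1 (m - 1), Gcheck x z i (w + x) * Gcheck x z (m - i) (w + x + i * z)) :
    (1 - w) * Δ_[x] (Gcheck x z m) w = m * x * Gcheck x z m (w + x) +
      ∑ i ∈ Icc 1 (m - 1), Gcheck x z i (w + x) * Δ_[x] (Gcheck x z (m - i)) (w + i * z) := by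
  have hdef := one_sub_mul_Gcheck (x := x) (z := z) hm hw
  simp only [fwdDiff, mul_sub, sum_sub_distrib, add_right_comm w x,
    Nat.cast_sub (by omega : 1 ≤ m), Nat.cast_one] at hR hdef ⊢
  linear_combination hR - hdef

theorem one_sub_mul_fwdDiff_Gcheck_of_admissible {m : ℕ} (hm : 1 ≤ m) {w : F3}
    (hw : Admissible x z w)
    (hT : ∑ k ∈ Icc 1 (m - 1),
        Δ_[x] (Gcheck x z k) (w + x) * Gcheck x z (m - k) (w + x + k * z) =
      (m - 1 : ℕ) * x * Gcheck x z m (w + x)) :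
    (1 - w) * Δ_[x] (Gcheck x z m) w = m * x * Gcheck x z m (w + x) +
      ∑ i ∈ Icc 1 (m - 1), Gcheck x z i (w + x) * Δ_[x] (Gcheck x z (m - i)) (w + i * z) := by
  rcases hm.eq_or_lt with rfl | hm
  · simpa using one_sub_mul_fwdDiff_Gcheck_one hw.one_sub_ne_zero hw.add_x.one_sub_ne_zero
  · exact one_sub_mul_fwdDiff_Gcheck hm hw.one_sub_ne_zero
      (one_sub_sub_mul_Gcheck_of_sum_fwdDiff hm hw.add_x.one_sub_ne_zero hT)

theorem sum_fwdDiff_Gcheck_mul_Gcheck (n : ℕ) {w : F3} (hw : Admissible x z w) :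
    ∑ k ∈ Icc 1 (n - 1), Δ_[x] (Gcheck x z k) w * Gcheck x z (n - k) (w + k * z) =
      (n - 1 : ℕ) * x * Gcheck x z n w := by
  induction n using Nat.strong_induction_on generalizing w with
  | _ n ih =>
  rcases lt_or_ge n 2 with hn | hn
  · obtain rfl | rfl : n = 0 ∨ n = 1 := by omega
    all_goals simp
  have hw₀ := hw.one_sub_ne_zero
  have hfwdDiff : ∀ k ∈ Icc 1 (n - 1), (1 - w) * Δ_[x] (Gcheck x z k) w =
      k * x * Gcheck x z k (w + x) +
        ∑ i ∈ Icc 1 (k - 1), Gcheck x z i (w + x) * Δ_[x] (Gcheck x z (k - i)) (w + i * z) := by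
    intro k hk
    have hk := mem_Icc.mp hk
    exact one_sub_mul_fwdDiff_Gcheck_of_admissible hk.1 hw (ih k (by omega) hw.add_x)
  have hshift : ∀ i ∈ Icc 1 (n - 1), ∑ j ∈ Icc 1 (n - 1 - i),
      Gcheck x z i (w + x) * Δ_[x] (Gcheck x z (i + j - i)) (w + i * z) *
        Gcheck x z (n - (i + j)) (w + (i + j : ℕ) * z) =
      (n - 1 - i : ℕ) * x * Gcheck x z i (w + x) * Gcheck x z (n - i) (w + i * z) := by
    intro i hi
    have := congrArg (Gcheck x z i (w + x) * ·)
      (ih (n - i) (by have := mem_Icc.mp hi; omega) (hw.add_natCast_mul_z i))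
    simp only [mul_sum, ← mul_assoc, Nat.sub_right_comm n i 1, Nat.sub_sub,
      Nat.add_sub_cancel_left, Nat.cast_add, add_mul, ← add_assoc] at this ⊢
    linear_combination this
  apply mul_left_cancel₀ hw₀
  calc (1 - w) * ∑ k ∈ Icc 1 (n - 1), Δ_[x] (Gcheck x z k) w * Gcheck x z (n - k) (w + k * z)
      = ∑ k ∈ Icc 1 (n - 1), k * x * Gcheck x z k (w + x) * Gcheck x z (n - k) (w + k * z) +
          ∑ k ∈ Icc 1 (n - 1), ∑ i ∈ Icc 1 (k - 1), Gcheck x z i (w + x) *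
            Δ_[x] (Gcheck x z (k - i)) (w + i * z) * Gcheck x z (n - k) (w + k * z) := by
        rw [mul_sum, ← sum_add_distrib]
        refine sum_congr rfl fun k hk => ?_
        rw [← mul_assoc, hfwdDiff k hk, add_mul, sum_mul]
    _ = ∑ k ∈ Icc 1 (n - 1), ((k + (n - 1 - k : ℕ)) * x) *
          (Gcheck x z k (w + x) * Gcheck x z (n - k) (w + k * z)) := by
        rw [sum_Icc_sum_Icc_eq_sum_Icc_sum_Icc_add, sum_congr rfl hshift, ← sum_add_distrib]
        refine sum_congr rfl fun k _ => by ring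
    _ = (1 - w) * ((n - 1 : ℕ) * x * Gcheck x z n w) := by
        rw [mul_left_comm, one_sub_mul_Gcheck hn hw₀, mul_sum]
        refine sum_congr rfl fun k hk => ?_
        rw [← Nat.cast_add, Nat.add_sub_cancel' (mem_Icc.mp hk).2]

end Recursions

/-- For all `n ≥ 2`, `Ǧ` satisfies the recursion of `Ĝ`:
`Ǧ_n(w,x,z) = ∑_{k=1}^{n-1} Ǧ_k(w,x,z) Ǧ_{n-k}(w+kz,x,z) / (1-w-(n-1)x)`. -/
theorem Gcheck_satisfies_Ghat_recursion (n : ℕ) (hn : 2 ≤ n) :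
    Gcheck Xv Zv n W = ∑ k ∈ Finset.Icc 1 (n - 1),
      Gcheck Xv Zv k W * Gcheck Xv Zv (n - k) (W + (k : F3) * Zv) /
        (1 - W - ((n - 1 : ℕ) : F3) * Xv) := by
  rw [← sum_div, ← one_sub_sub_mul_Gcheck_of_sum_fwdDiff hn admissible_W.one_sub_ne_zero
    (sum_fwdDiff_Gcheck_mul_Gcheck n admissible_W),
    mul_div_cancel_left₀ _ (admissible_W.one_sub_sub_natCast_mul_ne_zero _)]

end
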